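/- arXiv:1706.04519 — 2 statements merged into one kernel-verified Lean document; each statement's English description precedes it below -/
import Mathlib

section
/- Let B be a standard one-dimensional Brownian motion started at 0, fix γ ∈ [0, 1/2), and let M(t) = |{0 < s < t : |B_s| ≤ s^γ}|. Then there is a finite constant C > 0 such that E[M(t)²] ≤ C·t^{2γ+1} for all t ≥ 1; in particular limsup_{t→∞} E[(M(t)·t^{−(γ+1/2)})²] < ∞. -/
open MeasureTheory Filter Set ProbabilityTheory
open scoped ENNReal NNReal

noncomputable section

/-- The annuli `S₀ = [0,1)` and `Sₙ = [2^(n-1), 2^n)` for `n ≥ 1`. -/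
def macroAnnulus (n : ℕ) : Set ℝ :=
  if n = 0 then Set.Ico 0 1 else Set.Ico ((2 : ℝ) ^ (n - 1)) ((2 : ℝ) ^ n)

/-- `ν_ρ^n(E)`: the infimum of `Σ (|Q_i|/2^n)^ρ` over all finite coverings of `E ∩ Sₙ`
by nontrivial intervals with integer endpoints contained in `Sₙ`. -/
def nuN (ρ : ℝ) (n : ℕ) (E : Set ℝ) : ℝ≥0∞ :=
  ⨅ (Q : Finset (ℤ × ℤ))
    (_ : ∀ p ∈ Q, p.1 < p.2 ∧ Set.Ico (p.1 : ℝ) (p.2 : ℝ) ⊆ macroAnnulus n)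
    (_ : E ∩ macroAnnulus n ⊆ ⋃ p ∈ Q, Set.Ico (p.1 : ℝ) (p.2 : ℝ)),
    ∑ p ∈ Q, ENNReal.ofReal ((((p.2 : ℝ) - (p.1 : ℝ)) / 2 ^ n) ^ ρ)

/-- The macroscopic Hausdorff dimension. -/
def macroDimH (E : Set ℝ) : ℝ :=
  sInf {ρ : ℝ | 0 ≤ ρ ∧ ∑' n : ℕ, nuN ρ n E < ⊤}

/-- A standard one-dimensional Brownian motion started at 0, defined on a probability
space `(Ω, P)`: continuous paths (on `t ≥ 0`), Gaussian increments `B_t - B_s ∼ N(0, t-s)`,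
and independent increments. -/
def IsStandardBrownianMotion {Ω : Type*} [MeasurableSpace Ω] (P : Measure Ω)
    (B : ℝ → Ω → ℝ) : Prop :=
  IsProbabilityMeasure P ∧
  (∀ t : ℝ, Measurable (B t)) ∧
  (∀ ω, B 0 ω = 0) ∧
  (∀ ω, ContinuousOn (fun t => B t ω) (Set.Ici 0)) ∧
  (∀ s t : ℝ, 0 ≤ s → s ≤ t →
    Measure.map (fun ω => B t ω - B s ω) P = gaussianReal 0 (t - s).toNNReal) ∧
  (∀ (n : ℕ) (t : Fin (n + 1) → ℝ), (∀ i, 0 ≤ t i) → Monotone t →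
    iIndepFun
      (fun i : Fin n => fun ω => B (t i.succ) ω - B (t i.castSucc) ω) P)

/-- The sojourn set `E_γ = {t ≥ 0 : |B_t| ≤ t^γ}` of the path `B · ω`. -/
def sojournSet (B : ℝ → ℝ) (γ : ℝ) : Set ℝ :=
  {t : ℝ | 0 ≤ t ∧ |B t| ≤ t ^ γ}

/-- The sojourn time `M(t) = |{0 < s < t : |B_s| ≤ s^γ}|` (Lebesgue measure). -/
def sojournTime (B : ℝ → ℝ) (γ : ℝ) (t : ℝ) : ℝ≥0∞ :=
  volume {s : ℝ | 0 < s ∧ s < t ∧ |B s| ≤ s ^ γ}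

/-! By Fubini, `E[M(t)²] = 2 ∫∫_{0<s<u<t} P(|B_s| ≤ s^γ, |B_u| ≤ u^γ) du ds`. For `s < u < t`
the event forces `|B_s| ≤ t^γ` and `|B_u - B_s| ≤ 2 t^γ`; since these increments are independent
and a centred Gaussian of variance `v` gives mass at most `a / √v` to `[-a, a]`, the probability is
at most `(t^γ / √s) (2 t^γ / √(u - s))`. Integrating `1 / √(u - s)` over `u < t` and then
`1 / √s` over `s < t` gives `E[M(t)²] ≤ 16 t^{2γ + 1}`. -/

open Real

lemma gaussianPDFReal_le (μ : ℝ) (v : ℝ≥0) (x : ℝ) :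
    gaussianPDFReal μ v x ≤ (√(2 * π * v))⁻¹ := by
  refine mul_le_of_le_one_right (by positivity) (exp_le_one_iff.mpr ?_)
  exact div_nonpos_of_nonpos_of_nonneg (neg_nonpos.mpr (sq_nonneg _)) (by positivity)

lemma gaussianReal_le_mul_volume (μ : ℝ) {v : ℝ≥0} (hv : v ≠ 0) (s : Set ℝ) :
    gaussianReal μ v s ≤ ENNReal.ofReal (√(2 * π * v))⁻¹ * volume s := by
  rw [gaussianReal_apply μ hv s, ← setLIntegral_const]
  exact lintegral_mono fun x => ENNReal.ofReal_le_ofReal (gaussianPDFReal_le μ v x)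

lemma gaussianReal_Icc_le {v : ℝ≥0} (hv : v ≠ 0) {a : ℝ} (ha : 0 ≤ a) :
    gaussianReal 0 v (Icc (-a) a) ≤ ENNReal.ofReal (a / √v) := by
  have hv' : 0 < √(v : ℝ) := sqrt_pos.mpr (by positivity)
  have h2π : 2 ≤ √(2 * π) := le_sqrt_of_sq_le (by nlinarith [pi_gt_three])
  refine (gaussianReal_le_mul_volume 0 hv _).trans ?_
  rw [volume_Icc, ← ENNReal.ofReal_mul (by positivity)]
  refine ENNReal.ofReal_le_ofReal ?_
  rw [sqrt_mul (by positivity), div_eq_mul_inv, mul_inv]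
  have : (√(2 * π))⁻¹ * (a - -a) ≤ a := by
    rw [inv_mul_le_iff₀ (by positivity)]; nlinarith
  calc (√(2 * π))⁻¹ * (√v)⁻¹ * (a - -a) = (√(2 * π))⁻¹ * (a - -a) * (√v)⁻¹ := by ring
    _ ≤ a * (√v)⁻¹ := by gcongr

lemma lintegral_Ioc_sub_rpow {r : ℝ} (hr : -1 < r) {a b : ℝ} (hab : a ≤ b) :
    ∫⁻ x in Ioc a b, ENNReal.ofReal ((x - a) ^ r) =
      ENNReal.ofReal ((b - a) ^ (r + 1) / (r + 1)) := by
  have hint : IntervalIntegrable (fun x => (x - a) ^ r) volume a b := by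
    simpa using
      (intervalIntegral.intervalIntegrable_rpow' (a := a - a) (b := b - a) hr).comp_sub_right a
  rw [intervalIntegrable_iff_integrableOn_Ioc_of_le hab] at hint
  rw [← ofReal_integral_eq_lintegral_ofReal hint, ← intervalIntegral.integral_of_le hab,
    intervalIntegral.integral_comp_sub_right (fun x => x ^ r), sub_self, integral_rpow (.inl hr),
    zero_rpow (by linarith), sub_zero]
  filter_upwards [ae_restrict_mem measurableSet_Ioc] with x hx
  exact rpow_nonneg (sub_nonneg.mpr hx.1.le) r

lemma lintegral_Ioc_div_sqrt_sub {a b c : ℝ} (hab : a ≤ b) (hc : 0 ≤ c) :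
    ∫⁻ x in Ioc a b, ENNReal.ofReal (c / √(x - a)) = ENNReal.ofReal (2 * c * √(b - a)) := by
  have key : EqOn (fun x => ENNReal.ofReal (c / √(x - a)))
      (fun x => ENNReal.ofReal c * ENNReal.ofReal ((x - a) ^ (-(1 / 2) : ℝ))) (Ioc a b) :=
    fun x hx => by
      simp only [sqrt_eq_rpow, rpow_neg (sub_nonneg.mpr hx.1.le), div_eq_mul_inv,
        ENNReal.ofReal_mul hc]
  rw [setLIntegral_congr_fun measurableSet_Ioc key, lintegral_const_mul' _ _ ENNReal.ofReal_ne_top,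
    lintegral_Ioc_sub_rpow (by norm_num) hab, ← ENNReal.ofReal_mul hc, sqrt_eq_rpow]
  congr 1
  norm_num
  ring

section OccupationMeasure

variable {α Ω : Type*} [MeasurableSpace α] [MeasurableSpace Ω] {μ : Measure α} {P : Measure Ω}
  [SFinite μ] [SFinite P]

lemma measurableSet_pair_slices {D : Set (α × Ω)} (hD : MeasurableSet D) :
    MeasurableSet {q : (α × α) × Ω | (q.1.1, q.2) ∈ D ∧ (q.1.2, q.2) ∈ D} :=
  ((measurable_fst.fst.prodMk measurable_snd) hD).inter
    ((measurable_fst.snd.prodMk measurable_snd) hD)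

lemma measurable_measure_pair_slices {D : Set (α × Ω)} (hD : MeasurableSet D) :
    Measurable fun p : α × α => P {ω | (p.1, ω) ∈ D ∧ (p.2, ω) ∈ D} :=
  measurable_measure_prodMk_left (measurableSet_pair_slices hD)

lemma lintegral_measure_slice_sq {D : Set (α × Ω)} (hD : MeasurableSet D) :
    ∫⁻ ω, μ {x | (x, ω) ∈ D} ^ 2 ∂P =
      ∫⁻ x, ∫⁻ y, P {ω | (x, ω) ∈ D ∧ (y, ω) ∈ D} ∂μ ∂μ := by
  set S : Set ((α × α) × Ω) := {q | (q.1.1, q.2) ∈ D ∧ (q.1.2, q.2) ∈ D}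
  have hS : MeasurableSet S := measurableSet_pair_slices hD
  have hslice : ∀ ω, μ {x | (x, ω) ∈ D} ^ 2 = μ.prod μ ((fun p => (p, ω)) ⁻¹' S) := fun ω => by
    rw [sq, ← Measure.prod_prod]; rfl
  simp_rw [hslice]
  rw [← Measure.prod_apply_symm hS, Measure.prod_apply hS]
  exact lintegral_prod _ (measurable_measure_pair_slices hD).aemeasurable

end OccupationMeasure

lemma lintegral_lintegral_eq_two_mul_lintegral_Ioi {μ : Measure ℝ} [SFinite μ]
    [NullSingletonClass μ]
    {f : ℝ → ℝ → ℝ≥0∞} (hf : Measurable (Function.uncurry f)) (hsymm : ∀ x y, f x y = f y x) :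
    ∫⁻ x, ∫⁻ y, f x y ∂μ ∂μ = 2 * ∫⁻ x, ∫⁻ y in Ioi x, f x y ∂μ ∂μ := by
  have hsplit : ∀ x, ∫⁻ y, f x y ∂μ = ∫⁻ y in Iio x, f x y ∂μ + ∫⁻ y in Ioi x, f x y ∂μ :=
    fun x => by
      rw [← lintegral_union measurableSet_Ioi
        ((Iio_disjoint_Ici le_rfl).mono_right Ioi_subset_Ici_self), Iio_union_Ioi,
        restrict_compl_singleton]
  have hlt : MeasurableSet {p : ℝ × ℝ | p.2 < p.1} :=
    measurableSet_lt measurable_snd measurable_fst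
  have hIio : ∀ x, ∫⁻ y in Iio x, f x y ∂μ =
      ∫⁻ y, {p : ℝ × ℝ | p.2 < p.1}.indicator (Function.uncurry f) (x, y) ∂μ := fun x => by
    rw [← lintegral_indicator measurableSet_Iio]
    rfl
  have hIoi : ∀ x, ∫⁻ y in Ioi x, f x y ∂μ =
      ∫⁻ y, {p : ℝ × ℝ | p.2 < p.1}.indicator (Function.uncurry f) (y, x) ∂μ := fun x => by
    rw [← lintegral_indicator measurableSet_Ioi]
    congr with y
    by_cases h : x < y <;> simp [indicator, h, hsymm x y]
  have hswap : ∫⁻ x, ∫⁻ y in Iio x, f x y ∂μ ∂μ = ∫⁻ x, ∫⁻ y in Ioi x, f x y ∂μ ∂μ := by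
    simp_rw [hIio, hIoi]
    exact lintegral_lintegral_swap (hf.indicator hlt).aemeasurable
  have hmeas : Measurable fun x => ∫⁻ y in Iio x, f x y ∂μ := by
    simp_rw [hIio]
    exact (hf.indicator hlt).lintegral_prod_right'
  simp_rw [hsplit]
  rw [lintegral_add_left hmeas, hswap, two_mul]

lemma lintegral_measure_slice_sq_eq_two_mul {Ω : Type*} [MeasurableSpace Ω] {μ : Measure ℝ}
    {P : Measure Ω} [SFinite μ] [NullSingletonClass μ] [SFinite P] {D : Set (ℝ × Ω)}
    (hD : MeasurableSet D) :
    ∫⁻ ω, μ {x | (x, ω) ∈ D} ^ 2 ∂P =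
      2 * ∫⁻ x, ∫⁻ y in Ioi x, P {ω | (x, ω) ∈ D ∧ (y, ω) ∈ D} ∂μ ∂μ := by
  rw [lintegral_measure_slice_sq hD]
  exact lintegral_lintegral_eq_two_mul_lintegral_Ioi (measurable_measure_pair_slices hD)
    fun x y => by simp_rw [and_comm]

lemma lintegral_mul_rpow_neg_sq_le {Ω : Type*} [MeasurableSpace Ω] {P : Measure Ω}
    {f : Ω → ℝ≥0∞} {C t κ : ℝ} (ht : 0 < t)
    (hf : ∫⁻ ω, f ω ^ 2 ∂P ≤ ENNReal.ofReal (C * t ^ (2 * κ))) :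
    ∫⁻ ω, (f ω * ENNReal.ofReal (t ^ (-κ))) ^ 2 ∂P ≤ ENNReal.ofReal C := by
  have hscale : ENNReal.ofReal (t ^ (-κ)) ^ 2 = ENNReal.ofReal (t ^ (2 * κ))⁻¹ := by
    rw [← ENNReal.ofReal_pow (rpow_nonneg ht.le _), ← rpow_natCast, ← rpow_mul ht.le,
      ← rpow_neg ht.le]
    ring_nf
  simp_rw [mul_pow]
  rw [lintegral_mul_const' _ _ (by simp [hscale]), hscale]
  calc (∫⁻ ω, f ω ^ 2 ∂P) * ENNReal.ofReal (t ^ (2 * κ))⁻¹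
      ≤ ENNReal.ofReal (C * t ^ (2 * κ)) * ENNReal.ofReal (t ^ (2 * κ))⁻¹ := by gcongr
    _ = ENNReal.ofReal C := by
      rw [← ENNReal.ofReal_mul' (by positivity), mul_assoc,
        mul_inv_cancel₀ (rpow_pos_of_pos ht _).ne', mul_one]

def sojournRegion {Ω : Type*} (B : ℝ → Ω → ℝ) (γ t : ℝ) : Set (ℝ × Ω) :=
  {p | 0 < p.1 ∧ p.1 < t ∧ |B p.1 p.2| ≤ p.1 ^ γ}

namespace IsStandardBrownianMotion

variable {Ω : Type*} [MeasurableSpace Ω] {P : Measure Ω} {B : ℝ → Ω → ℝ}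

lemma indepFun_sub_sub (hB : IsStandardBrownianMotion P B) {r s u : ℝ} (hr : 0 ≤ r)
    (hrs : r ≤ s) (hsu : s ≤ u) :
    IndepFun (fun ω => B s ω - B r ω) (fun ω => B u ω - B s ω) P := by
  have hmono : Monotone ![r, s, u] := by
    rw [Fin.monotone_iff_le_succ]
    intro i
    fin_cases i <;> simp [hrs, hsu]
  have hnonneg : ∀ i, 0 ≤ ![r, s, u] i := by
    intro i
    fin_cases i <;> simp <;> linarith
  simpa using (hB.2.2.2.2.2 2 ![r, s, u] hnonneg hmono).indepFun (i := 0) (j := 1) (by decide)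

lemma map_eq_gaussianReal (hB : IsStandardBrownianMotion P B) {s : ℝ} (hs : 0 ≤ s) :
    P.map (B s) = gaussianReal 0 s.toNNReal := by
  simpa [hB.2.2.1] using hB.2.2.2.2.1 0 s le_rfl hs

lemma measure_abs_le_inter_abs_le (hB : IsStandardBrownianMotion P B) {s u a b : ℝ}
    (hs : 0 < s) (hsu : s < u) (ha : 0 ≤ a) (hb : 0 ≤ b) :
    P ({ω | |B s ω| ≤ a} ∩ {ω | |B u ω| ≤ b}) ≤
      ENNReal.ofReal (a / √s) * ENNReal.ofReal ((a + b) / √(u - s)) := by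
  have hind : IndepFun (B s) (fun ω => B u ω - B s ω) P := by
    simpa [hB.2.2.1] using hB.indepFun_sub_sub le_rfl hs.le hsu.le
  have hsub : {ω | |B s ω| ≤ a} ∩ {ω | |B u ω| ≤ b} ⊆
      B s ⁻¹' Icc (-a) a ∩ (fun ω => B u ω - B s ω) ⁻¹' Icc (-(a + b)) (a + b) := by
    rintro ω ⟨h1 : |B s ω| ≤ a, h2 : |B u ω| ≤ b⟩
    have := abs_sub (B u ω) (B s ω)
    exact ⟨abs_le.mp h1, abs_le.mp (by linarith)⟩
  refine (measure_mono hsub).trans ?_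
  rw [hind.measure_inter_preimage_eq_mul _ _ measurableSet_Icc measurableSet_Icc,
    ← Measure.map_apply (hB.2.1 s) measurableSet_Icc,
    ← Measure.map_apply (f := fun ω => B u ω - B s ω) ((hB.2.1 u).sub (hB.2.1 s))
      measurableSet_Icc,
    hB.map_eq_gaussianReal hs.le, hB.2.2.2.2.1 s u hs.le hsu.le]
  gcongr
  · simpa [hs.le] using gaussianReal_Icc_le (v := s.toNNReal) (by simpa using hs) ha
  · simpa [hsu.le] using gaussianReal_Icc_le (v := (u - s).toNNReal) (by simpa using hsu)
      (add_nonneg ha hb)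

lemma measurable_uncurry_max_zero (hB : IsStandardBrownianMotion P B) :
    Measurable fun p : ℝ × Ω => B (max p.1 0) p.2 :=
  measurable_uncurry_of_continuous_of_measurable
    (fun ω => (hB.2.2.2.1 ω).comp_continuous (continuous_id.max continuous_const)
      fun s => le_max_right s 0)
    fun _ => hB.2.1 _

lemma measurableSet_sojournRegion (hB : IsStandardBrownianMotion P B) (γ t : ℝ) :
    MeasurableSet (sojournRegion B γ t) := by
  have h : sojournRegion B γ t = {p | 0 < p.1 ∧ p.1 < t ∧ |B (max p.1 0) p.2| ≤ p.1 ^ γ} := by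
    ext ⟨s, ω⟩
    exact and_congr_right fun hs => by simp only [max_eq_left hs.le]
  rw [h]
  exact (measurableSet_lt measurable_const measurable_fst).inter
    ((measurableSet_lt measurable_fst measurable_const).inter
      (measurableSet_le hB.measurable_uncurry_max_zero.abs (measurable_fst.pow_const γ)))

lemma lintegral_Ioi_measure_sojournRegion_le (hB : IsStandardBrownianMotion P B) {γ : ℝ}
    (hγ : 0 ≤ γ) (t s : ℝ) :
    ∫⁻ u in Ioi s, P {ω | (s, ω) ∈ sojournRegion B γ t ∧ (u, ω) ∈ sojournRegion B γ t} ≤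
      (Ioo 0 t).indicator
        (fun s => ENNReal.ofReal (t ^ γ / √s) * ENNReal.ofReal (4 * t ^ γ * √t)) s := by
  by_cases hs : s ∈ Ioo 0 t
  swap
  · have hempty : ∀ u, {ω | (s, ω) ∈ sojournRegion B γ t ∧ (u, ω) ∈ sojournRegion B γ t} = ∅ :=
      fun u => eq_empty_of_forall_notMem fun ω h => hs ⟨h.1.1, h.1.2.1⟩
    simp [hempty]
  have ha : 0 ≤ t ^ γ := rpow_nonneg (hs.1.trans hs.2).le γ
  set g : ℝ → ℝ≥0∞ := fun u =>
    ENNReal.ofReal (t ^ γ / √s) * ENNReal.ofReal ((t ^ γ + t ^ γ) / √(u - s))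
  have hpair : ∀ u ∈ Ioi s,
      P {ω | (s, ω) ∈ sojournRegion B γ t ∧ (u, ω) ∈ sojournRegion B γ t} ≤
        (Ioc s t).indicator g u := by
    intro u hu
    by_cases hut : u < t
    · rw [indicator_of_mem (show u ∈ Ioc s t from ⟨hu, hut.le⟩)]
      refine le_trans (measure_mono ?_) (hB.measure_abs_le_inter_abs_le hs.1 hu ha ha)
      rintro ω ⟨⟨hs0, -, hBs⟩, ⟨hu0, -, hBu⟩⟩
      exact ⟨hBs.trans (rpow_le_rpow hs0.le hs.2.le hγ),
        hBu.trans (rpow_le_rpow hu0.le hut.le hγ)⟩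
    · refine le_of_eq_of_le (measure_mono_null (fun ω h => ?_) measure_empty) bot_le
      exact hut h.2.2.1
  calc ∫⁻ u in Ioi s, P {ω | (s, ω) ∈ sojournRegion B γ t ∧ (u, ω) ∈ sojournRegion B γ t}
      ≤ ∫⁻ u in Ioi s, (Ioc s t).indicator g u := setLIntegral_mono' measurableSet_Ioi hpair
    _ ≤ ∫⁻ u in Ioc s t, g u := by
      rw [← lintegral_indicator measurableSet_Ioc]; exact setLIntegral_le_lintegral _ _
    _ = ENNReal.ofReal (t ^ γ / √s) * ENNReal.ofReal (2 * (t ^ γ + t ^ γ) * √(t - s)) := by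
      rw [lintegral_const_mul' _ _ ENNReal.ofReal_ne_top,
        lintegral_Ioc_div_sqrt_sub hs.2.le (by positivity)]
    _ ≤ _ := by
      rw [indicator_of_mem hs]
      refine mul_le_mul' le_rfl (ENNReal.ofReal_le_ofReal ?_)
      nlinarith [sqrt_le_sqrt (by linarith [hs.1] : t - s ≤ t), sqrt_nonneg (t - s)]

lemma lintegral_sojournTime_sq_le (hB : IsStandardBrownianMotion P B) {γ : ℝ} (hγ : 0 ≤ γ)
    {t : ℝ} (ht : 0 < t) :
    ∫⁻ ω, sojournTime (fun s => B s ω) γ t ^ 2 ∂P ≤ ENNReal.ofReal (16 * t ^ (2 * γ + 1)) := by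
  have : IsProbabilityMeasure P := hB.1
  have ha : 0 ≤ t ^ γ := rpow_nonneg ht.le γ
  set K := ENNReal.ofReal (4 * t ^ γ * √t)
  calc ∫⁻ ω, sojournTime (fun s => B s ω) γ t ^ 2 ∂P
      = 2 * ∫⁻ s, ∫⁻ u in Ioi s,
          P {ω | (s, ω) ∈ sojournRegion B γ t ∧ (u, ω) ∈ sojournRegion B γ t} :=
        lintegral_measure_slice_sq_eq_two_mul (hB.measurableSet_sojournRegion γ t)
    _ ≤ 2 * ∫⁻ s, (Ioo 0 t).indicator (fun s => ENNReal.ofReal (t ^ γ / √s) * K) s := by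
        gcongr with s
        exact hB.lintegral_Ioi_measure_sojournRegion_le hγ t s
    _ ≤ 2 * ∫⁻ s in Ioc 0 t, ENNReal.ofReal (t ^ γ / √(s - 0)) * K := by
        simp_rw [lintegral_indicator measurableSet_Ioo, sub_zero]
        exact mul_le_mul' le_rfl (lintegral_mono_set Ioo_subset_Ioc_self)
    _ = 2 * (ENNReal.ofReal (2 * t ^ γ * √(t - 0)) * K) := by
        rw [lintegral_mul_const' _ _ ENNReal.ofReal_ne_top, lintegral_Ioc_div_sqrt_sub ht.le ha]
    _ = ENNReal.ofReal (16 * t ^ (2 * γ + 1)) := by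
        rw [← ENNReal.ofReal_mul (by positivity), ← ENNReal.ofReal_ofNat 2,
          ← ENNReal.ofReal_mul zero_le_two, sub_zero, show 2 * γ + 1 = γ + γ + 1 by ring,
          rpow_add ht, rpow_add ht, rpow_one]
        congr 1
        linear_combination (16 * t ^ γ * t ^ γ) * mul_self_sqrt ht.le

end IsStandardBrownianMotion

theorem expected_sojournTime_sq_bound_general {Ω : Type*} [MeasurableSpace Ω] (P : Measure Ω)
    (B : ℝ → Ω → ℝ) (hB : IsStandardBrownianMotion P B)
    (γ : ℝ) (hγ0 : 0 ≤ γ) :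
    (∃ C : ℝ, 0 < C ∧ ∀ t : ℝ, 1 ≤ t →
      ∫⁻ ω, (sojournTime (fun s => B s ω) γ t) ^ 2 ∂P ≤
        ENNReal.ofReal (C * t ^ (2 * γ + 1))) ∧
    Filter.limsup
      (fun t : ℝ =>
        ∫⁻ ω, (sojournTime (fun s => B s ω) γ t * ENNReal.ofReal (t ^ (-(γ + 1 / 2)))) ^ 2 ∂P)
      Filter.atTop < ⊤ := by
  refine ⟨⟨16, by norm_num, fun t ht => hB.lintegral_sojournTime_sq_le hγ0 (by linarith)⟩, ?_⟩
  refine (limsup_le_of_le (by isBoundedDefault) ?_).trans_lt (ENNReal.ofReal_lt_top (r := 16))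
  filter_upwards [eventually_gt_atTop 0] with t ht
  refine lintegral_mul_rpow_neg_sq_le ht ?_
  rw [show 2 * (γ + 1 / 2) = 2 * γ + 1 by ring]
  exact hB.lintegral_sojournTime_sq_le hγ0 ht

/-- second-moment bound `E[M(t)²] ≤ C t^{2γ+1}`; in particular
`limsup_{t→∞} E[(M(t) t^{−(γ+1/2)})²] < ∞`. -/
theorem expected_sojournTime_sq_bound {Ω : Type*} [MeasurableSpace Ω] (P : Measure Ω)
    (B : ℝ → Ω → ℝ) (hB : IsStandardBrownianMotion P B)
    (γ : ℝ) (hγ0 : 0 ≤ γ) (hγ : γ < 1 / 2) :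
    (∃ C : ℝ, 0 < C ∧ ∀ t : ℝ, 1 ≤ t →
      ∫⁻ ω, (sojournTime (fun s => B s ω) γ t) ^ 2 ∂P ≤
        ENNReal.ofReal (C * t ^ (2 * γ + 1))) ∧
    Filter.limsup
      (fun t : ℝ =>
        ∫⁻ ω, (sojournTime (fun s => B s ω) γ t * ENNReal.ofReal (t ^ (-(γ + 1 / 2)))) ^ 2 ∂P)
      Filter.atTop < ⊤ :=
  expected_sojournTime_sq_bound_general P B hB γ hγ0
end
end

section
/- Let B be a standard one-dimensional Brownian motion started at 0. With probability one, there exists an integer N ≥ 1 such that for every n ≥ N and every integer ℓ ∈ [2^{n-1}, 2^n − n^{3/2}], at least one of the consecutive unit intervals I_k = [ℓ+k, ℓ+k+1], k = 0, …, ⌈n^{3/2}⌉ − 1, satisfies Osc_{I_k}(B) ≥ log log n. -/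
/-! On a unit interval the oscillation of a continuous path dominates its increment. For a fixed
starting point `ℓ` the `M = ⌈n^{3/2}⌉` unit increments are i.i.d. standard Gaussians, and
`P(|X| ≥ a) ≥ exp (-(a + 2)²)`, so with `a = log log n` all of them are smaller than `a` with
probability at most `exp (-M exp (-(a + 2)²)) ≤ exp (-2n)`, because `(log log n + 2)² = o(log n)`.
A union bound over the `2^n` starting points gives the summable bound `2^{-n}`, and
Borel–Cantelli finishes the proof. -/

open MeasureTheory Filter Set ProbabilityTheory
open scoped ENNReal NNReal

noncomputable section

/-- The oscillation of `f` on `I`: `Osc_I(f) = sup_I f − inf_I f`. -/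
def osc (f : ℝ → ℝ) (I : Set ℝ) : ℝ := sSup (f '' I) - sInf (f '' I)

open Real

lemma abs_sub_le_osc_Icc {f : ℝ → ℝ} {s t : ℝ} (hf : ContinuousOn f (Icc s t)) (hst : s ≤ t) :
    |f t - f s| ≤ osc f (Icc s t) := by
  have hcpt : IsCompact (f '' Icc s t) := isCompact_Icc.image_of_continuousOn hf
  have hs : f s ∈ f '' Icc s t := mem_image_of_mem f (left_mem_Icc.2 hst)
  have ht : f t ∈ f '' Icc s t := mem_image_of_mem f (right_mem_Icc.2 hst)
  rw [osc, abs_le]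
  constructor <;> linarith [le_csSup hcpt.bddAbove hs, le_csSup hcpt.bddAbove ht,
    csInf_le hcpt.bddBelow hs, csInf_le hcpt.bddBelow ht]

lemma exp_neg_one_sub_sq_div_two_le_gaussianPDFReal (x : ℝ) :
    exp (-1 - x ^ 2 / 2) ≤ gaussianPDFReal 0 1 x := by
  have hsqrt : √(2 * π) ≤ exp 1 := by
    rw [sqrt_le_left (exp_pos 1).le]
    nlinarith [pi_lt_d2, exp_one_gt_d9]
  rw [gaussianPDFReal, sub_eq_add_neg, exp_add, exp_neg 1]
  simp only [NNReal.coe_one, mul_one, sub_zero, neg_div]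
  gcongr

lemma exp_neg_add_two_sq_le_gaussianReal_Icc {a : ℝ} (ha : 0 ≤ a) :
    exp (-(a + 2) ^ 2) ≤ (gaussianReal 0 1).real (Icc a (a + 1)) := by
  have hpdf : ∀ x ∈ Icc a (a + 1), exp (-(a + 2) ^ 2) ≤ gaussianPDFReal 0 1 x := by
    intro x ⟨hax, hxa⟩
    refine le_trans (exp_le_exp.2 ?_) (exp_neg_one_sub_sq_div_two_le_gaussianPDFReal x)
    nlinarith
  calc exp (-(a + 2) ^ 2) = exp (-(a + 2) ^ 2) * volume.real (Icc a (a + 1)) := by simp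
    _ ≤ ∫ x in Icc a (a + 1), gaussianPDFReal 0 1 x :=
      setIntegral_ge_of_const_le_real measurableSet_Icc (by simp) hpdf
        (integrable_gaussianPDFReal 0 1).integrableOn
    _ = (gaussianReal 0 1).real (Icc a (a + 1)) := by
      rw [measureReal_def, gaussianReal_apply_eq_integral 0 one_ne_zero,
        ENNReal.toReal_ofReal (setIntegral_nonneg measurableSet_Icc
          fun x _ => gaussianPDFReal_nonneg 0 1 x)]

lemma measureReal_gaussianReal_abs_lt_le {a : ℝ} (ha : 0 ≤ a) :
    (gaussianReal 0 1).real {x | |x| < a} ≤ 1 - exp (-(a + 2) ^ 2) := by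
  have hsub : {x : ℝ | |x| < a} ⊆ (Icc a (a + 1))ᶜ :=
    fun x hx hmem => (hmem.1.trans (le_abs_self x)).not_gt hx
  calc (gaussianReal 0 1).real {x | |x| < a} ≤ (gaussianReal 0 1).real (Icc a (a + 1))ᶜ :=
        measureReal_mono hsub
    _ ≤ 1 - exp (-(a + 2) ^ 2) := by
        rw [probReal_compl_eq_one_sub measurableSet_Icc]
        linarith [exp_neg_add_two_sq_le_gaussianReal_Icc ha]

section Brownian

variable {Ω : Type*} [MeasurableSpace Ω] {P : Measure Ω} {B : ℝ → Ω → ℝ}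

def smallIncrements (B : ℝ → Ω → ℝ) (a t : ℝ) (M : ℕ) : Set Ω :=
  ⋂ i : Fin M, {ω | |B (t + (i : ℕ) + 1) ω - B (t + (i : ℕ)) ω| < a}

lemma IsStandardBrownianMotion.measure_smallIncrements (hB : IsStandardBrownianMotion P B)
    {t : ℝ} (ht : 0 ≤ t) (a : ℝ) (M : ℕ) :
    P (smallIncrements B a t M) = gaussianReal 0 1 {x | |x| < a} ^ M := by
  obtain ⟨-, hmeas, -, -, hmap, hindep⟩ := hB
  let τ : Fin (M + 1) → ℝ := fun j => t + (j : ℕ)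
  have hτ : Monotone τ := fun i j hij => by simpa [τ] using hij
  have hτ₀ : ∀ j, 0 ≤ τ j := fun j => by positivity
  have hset : MeasurableSet {x : ℝ | |x| < a} := measurableSet_lt (by fun_prop) measurable_const
  have hincr : ∀ i : Fin M,
      P ((fun ω => B (τ i.succ) ω - B (τ i.castSucc) ω) ⁻¹' {x | |x| < a}) =
        gaussianReal 0 1 {x | |x| < a} := by
    intro i
    have hm : Measurable fun ω => B (τ i.succ) ω - B (τ i.castSucc) ω := (hmeas _).sub (hmeas _)
    rw [← Measure.map_apply hm hset,
      hmap _ _ (hτ₀ _) (hτ (Fin.castSucc_le_succ i))]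
    simp [τ, add_sub_add_left_eq_sub]
  calc P (smallIncrements B a t M)
      = P (⋂ (i : Fin M) (_ : i ∈ Finset.univ),
          (fun ω => B (τ i.succ) ω - B (τ i.castSucc) ω) ⁻¹' {x | |x| < a}) := by
        simp [smallIncrements, τ, add_assoc]
    _ = ∏ i : Fin M, P ((fun ω => B (τ i.succ) ω - B (τ i.castSucc) ω) ⁻¹' {x | |x| < a}) :=
        iIndepFun_iff_measure_inter_preimage_eq_mul.1 (hindep M τ hτ₀ hτ) _ fun _ _ => hset
    _ = gaussianReal 0 1 {x | |x| < a} ^ M := by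
        simp only [hincr, Finset.prod_const, Finset.card_univ, Fintype.card_fin]

lemma IsStandardBrownianMotion.measureReal_smallIncrements_le (hB : IsStandardBrownianMotion P B)
    {a t : ℝ} (ha : 0 ≤ a) (ht : 0 ≤ t) (M : ℕ) :
    P.real (smallIncrements B a t M) ≤ exp (-M * exp (-(a + 2) ^ 2)) := by
  calc P.real (smallIncrements B a t M) = (gaussianReal 0 1).real {x | |x| < a} ^ M := by
        simp [measureReal_def, hB.measure_smallIncrements ht]
    _ ≤ exp (-exp (-(a + 2) ^ 2)) ^ M := by
        gcongr
        linarith [measureReal_gaussianReal_abs_lt_le ha, add_one_le_exp (-exp (-(a + 2) ^ 2))]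
    _ = exp (-M * exp (-(a + 2) ^ 2)) := by rw [← exp_nat_mul]; ring_nf

lemma IsStandardBrownianMotion.measureReal_biUnion_smallIncrements_le
    (hB : IsStandardBrownianMotion P B) {a : ℝ} (ha : 0 ≤ a) (L M : ℕ) :
    P.real (⋃ ℓ ∈ Finset.range L, smallIncrements B a ℓ M) ≤
      L * exp (-M * exp (-(a + 2) ^ 2)) :=
  calc P.real (⋃ ℓ ∈ Finset.range L, smallIncrements B a ℓ M)
      ≤ ∑ ℓ ∈ Finset.range L, P.real (smallIncrements B a ℓ M) :=
        measureReal_biUnion_finset_le _ _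
    _ ≤ ∑ ℓ ∈ Finset.range L, exp (-M * exp (-(a + 2) ^ 2)) :=
        Finset.sum_le_sum fun ℓ _ => hB.measureReal_smallIncrements_le ha ℓ.cast_nonneg M
    _ = L * exp (-M * exp (-(a + 2) ^ 2)) := by simp

end Brownian

lemma eventually_log_two_add_sq_log_add_two_le :
    ∀ᶠ x : ℝ in atTop, log 2 + (log x + 2) ^ 2 ≤ x / 2 := by
  have hlo : (fun x => log 2 + (log x + 2) ^ 2) =o[atTop] id := by
    have := ((Asymptotics.isLittleO_const_id_atTop (log 2 + 4)).add
      (isLittleO_log_id_atTop.const_mul_left 4)).add (isLittleO_pow_log_id_atTop (n := 2))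
    exact this.congr_left fun x => by ring
  filter_upwards [hlo.def (by norm_num : (0 : ℝ) < 1 / 2), eventually_ge_atTop 0] with x hx hx₀
  rw [norm_eq_abs, id, norm_of_nonneg hx₀] at hx
  linarith [le_abs_self (log 2 + (log x + 2) ^ 2)]

lemma two_pow_mul_exp_neg_ceil_le {n : ℕ} (hn : 0 < n) {b : ℝ} (hb : log 2 + b ≤ log n / 2) :
    (2 : ℝ) ^ n * exp (-⌈(n : ℝ) ^ ((3 : ℝ) / 2)⌉₊ * exp (-b)) ≤ (1 / 2) ^ n := by
  have hn' : (0 : ℝ) < n := by exact_mod_cast hn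
  have hsqrt : 2 ≤ (n : ℝ) ^ ((1 : ℝ) / 2) * exp (-b) :=
    calc (2 : ℝ) = exp (log 2 + b) * exp (-b) := by
          rw [← exp_add, add_neg_cancel_right, exp_log two_pos]
      _ ≤ (n : ℝ) ^ ((1 : ℝ) / 2) * exp (-b) := by
          rw [rpow_def_of_pos hn']
          gcongr
          linarith
  have hlin : 2 * (n : ℝ) ≤ ⌈(n : ℝ) ^ ((3 : ℝ) / 2)⌉₊ * exp (-b) :=
    calc 2 * (n : ℝ) ≤ n * ((n : ℝ) ^ ((1 : ℝ) / 2) * exp (-b)) := by nlinarith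
      _ = (n : ℝ) ^ ((3 : ℝ) / 2) * exp (-b) := by
          rw [show (3 : ℝ) / 2 = 1 + 1 / 2 by norm_num, rpow_add hn', rpow_one, mul_assoc]
      _ ≤ ⌈(n : ℝ) ^ ((3 : ℝ) / 2)⌉₊ * exp (-b) := by gcongr; exact Nat.le_ceil _
  have hexp2 : 4 ≤ exp 2 := by
    rw [show (2 : ℝ) = 1 + 1 by norm_num, exp_add]
    nlinarith [exp_one_gt_d9]
  calc (2 : ℝ) ^ n * exp (-⌈(n : ℝ) ^ ((3 : ℝ) / 2)⌉₊ * exp (-b))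
      ≤ 2 ^ n * exp (-2) ^ n := by
        rw [← exp_nat_mul]
        exact mul_le_mul_of_nonneg_left (exp_le_exp.2 (by linarith)) (by positivity)
    _ = (2 * exp (-2)) ^ n := (mul_pow _ _ _).symm
    _ ≤ (1 / 2) ^ n := by
        gcongr
        rw [exp_neg, ← div_eq_mul_inv, div_le_iff₀ (exp_pos 2)]
        linarith

lemma tsum_measure_ne_top_of_summable_measureReal {α : Type*} [MeasurableSpace α] {μ : Measure α}
    [IsFiniteMeasure μ] {s : ℕ → Set α} (h : Summable fun n => μ.real (s n)) :
    ∑' n, μ (s n) ≠ ∞ := by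
  simp_rw [← ofReal_measureReal (measure_ne_top μ _)]
  rw [← ENNReal.ofReal_tsum_of_nonneg (fun _ => measureReal_nonneg) h]
  exact ENNReal.ofReal_ne_top

lemma IsStandardBrownianMotion.ae_eventually_notMem_smallIncrements {Ω : Type*}
    [MeasurableSpace Ω] {P : Measure Ω} {B : ℝ → Ω → ℝ} (hB : IsStandardBrownianMotion P B) :
    ∀ᵐ ω ∂P, ∀ᶠ n : ℕ in atTop, ∀ ℓ : ℕ, ℓ < 2 ^ n →
      ω ∉ smallIncrements B (log (log n)) ℓ ⌈(n : ℝ) ^ ((3 : ℝ) / 2)⌉₊ := by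
  have := hB.1
  set E : ℕ → Set Ω := fun n =>
    ⋃ ℓ ∈ Finset.range (2 ^ n), smallIncrements B (log (log n)) ℓ ⌈(n : ℝ) ^ ((3 : ℝ) / 2)⌉₊
  have hlog : Tendsto (fun n : ℕ => log n) atTop atTop :=
    tendsto_log_atTop.comp tendsto_natCast_atTop_atTop
  have hE : ∀ᶠ n : ℕ in atTop, P.real (E n) ≤ (1 / 2) ^ n := by
    filter_upwards [hlog.eventually_ge_atTop 1,
      hlog.eventually eventually_log_two_add_sq_log_add_two_le, eventually_gt_atTop 0]
      with n h1 hb hn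
    calc P.real (E n)
        ≤ (2 ^ n : ℕ) * exp (-⌈(n : ℝ) ^ ((3 : ℝ) / 2)⌉₊ * exp (-(log (log n) + 2) ^ 2)) :=
          hB.measureReal_biUnion_smallIncrements_le (log_nonneg h1) _ _
      _ ≤ (1 / 2) ^ n := by push_cast; exact two_pow_mul_exp_neg_ceil_le hn hb
  have hsum : Summable fun n => P.real (E n) :=
    summable_geometric_two.of_norm_bounded_eventually_nat
      (by filter_upwards [hE] with n hn; rwa [norm_of_nonneg measureReal_nonneg])
  filter_upwards [ae_eventually_notMem (tsum_measure_ne_top_of_summable_measureReal hsum)]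
    with ω hω
  filter_upwards [hω] with n hn ℓ hℓ hmem
  exact hn (mem_biUnion (Finset.mem_range.2 hℓ) hmem)

/-- with probability one, for all large `n`, every block of `⌈n^{3/2}⌉`
consecutive unit intervals starting at an integer `ℓ ∈ [2^{n-1}, 2^n − n^{3/2}]` contains a
unit interval on which the oscillation of `B` is at least `log log n`. -/
theorem oscillation_in_blocks {Ω : Type*} [MeasurableSpace Ω] (P : Measure Ω)
    (B : ℝ → Ω → ℝ) (hB : IsStandardBrownianMotion P B) :
    ∀ᵐ ω ∂P, ∃ N : ℕ, 1 ≤ N ∧ ∀ n : ℕ, N ≤ n → ∀ ℓ : ℤ,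
      (2 : ℝ) ^ (n - 1) ≤ (ℓ : ℝ) → (ℓ : ℝ) ≤ (2 : ℝ) ^ n - (n : ℝ) ^ ((3 : ℝ) / 2) →
      ∃ k : ℕ, k < Nat.ceil ((n : ℝ) ^ ((3 : ℝ) / 2)) ∧
        Real.log (Real.log (n : ℝ)) ≤
          osc (fun t => B t ω) (Set.Icc ((ℓ : ℝ) + (k : ℝ)) ((ℓ : ℝ) + (k : ℝ) + 1)) := by
  filter_upwards [hB.ae_eventually_notMem_smallIncrements] with ω hω
  obtain ⟨-, -, -, hcont, -, -⟩ := hB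
  obtain ⟨N, hN⟩ := eventually_atTop.1 hω
  refine ⟨N + 1, by omega, fun n hn ℓ hℓ₁ hℓ₂ => ?_⟩
  lift ℓ to ℕ using by exact_mod_cast (pow_pos two_pos _).le.trans hℓ₁
  have hℓ : ℓ < 2 ^ n := by
    have : (0 : ℝ) < (n : ℝ) ^ ((3 : ℝ) / 2) := rpow_pos_of_pos (by norm_cast; omega) _
    exact_mod_cast (hℓ₂.trans_lt (sub_lt_self _ this) : ((ℓ : ℤ) : ℝ) < 2 ^ n)
  have hlarge := hN n (by omega) ℓ hℓ
  simp only [smallIncrements, mem_iInter, mem_ofPred_eq, not_forall, not_lt] at hlarge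
  obtain ⟨i, hi⟩ := hlarge
  refine ⟨i, i.isLt, hi.trans ?_⟩
  push_cast
  exact abs_sub_le_osc_Icc ((hcont ω).mono fun t ht => le_trans (by positivity) ht.1)
    (by linarith)

end
end
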